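/- arXiv:2202.13776 — 5 statements merged into one kernel-verified Lean document; each statement's English description precedes it below -/
import Mathlib

section
/- Let n, s ≥ 1. Let A be a nonnegative n×n real matrix, b and c nonnegative vectors in ℝⁿ, and d ≥ 0 a real number, and let M be the (n+1)×(n+1) block matrix M = [[A, b],[cᵀ, d]]. Let B be a nonnegative n×s matrix whose i-th row sum equals b_i for every i, let C be the s×n matrix each of whose rows equals cᵀ, and let D be a nonnegative s×s matrix all of whose row sums equal d. Set M̃ = [[A, B],[C, D]], an (n+s)×(n+s) matrix. Then the spectral radius of M̃ equals the spectral radius of M. -/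
/-!
Let `f : Fin n ⊕ Fin s → Fin n ⊕ Fin 1` collapse the last `s` indices to one and let `P` be the
`0/1` matrix of `f` (so `P v = v ∘ f`). The row sum conditions say exactly that `M̃ P = P M`.
Hence every eigenvector `v` of `M` lifts to the eigenvector `P v` of `M̃`, giving `ρ(M) ≤ ρ(M̃)`.
Conversely `M̃ᵏ P = P Mᵏ`; for a nonnegative matrix the `ℓ^∞` operator norm is the largest entry
of its product with the all-ones vector `𝟙 = P 𝟙`, so `‖M̃ᵏ‖ ≤ ‖Mᵏ‖` and Gelfand's formula gives
`ρ(M̃) ≤ ρ(M)`.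
-/

open Matrix

/-- Spectral radius of a real square matrix: the maximum of the moduli of its
complex eigenvalues (elements of the spectrum of the matrix over `ℂ`). -/
noncomputable def specRad {n : Type*} [Fintype n] [DecidableEq n]
    (M : Matrix n n ℝ) : ℝ :=
  sSup ((fun z : ℂ => ‖z‖) '' spectrum ℂ (M.map (algebraMap ℝ ℂ)))

open scoped NNReal ENNReal

attribute [local instance] Matrix.linftyOpNormedAddCommGroup Matrix.linftyOpNormedRing
  Matrix.linftyOpNormedAlgebra

theorem spectralRadius_le_of_nnnorm_pow_le {A B : Type*} [NormedRing A] [NormedAlgebra ℂ A]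
    [CompleteSpace A] [NormedRing B] [NormedAlgebra ℂ B] [CompleteSpace B] {a : A} {b : B}
    (h : ∀ k : ℕ, ‖a ^ k‖₊ ≤ ‖b ^ k‖₊) : spectralRadius ℂ a ≤ spectralRadius ℂ b :=
  le_of_tendsto_of_tendsto' (spectrum.pow_nnnorm_pow_one_div_tendsto_nhds_spectralRadius a)
    (spectrum.pow_nnnorm_pow_one_div_tendsto_nhds_spectralRadius b) fun k =>
      ENNReal.rpow_le_rpow (ENNReal.coe_le_coe.2 (h k)) (by positivity)

theorem specRad_eq_toReal_spectralRadius {ι : Type*} [Fintype ι] [DecidableEq ι]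
    (M : Matrix ι ι ℝ) : specRad M = (spectralRadius ℂ (M.map (algebraMap ℝ ℂ))).toReal := by
  rcases (spectrum ℂ (M.map (algebraMap ℝ ℂ))).eq_empty_or_nonempty with hS | hS
  · simp only [specRad, spectralRadius, hS]
    simp
  obtain ⟨z, hz, hmax⟩ := (spectrum ℂ _).exists_max_image (‖·‖) (finite_spectrum _) hS
  have hspecRad : specRad M = ‖z‖ :=
    IsGreatest.csSup_eq ⟨⟨z, hz, rfl⟩, by rintro _ ⟨w, hw, rfl⟩; exact hmax w hw⟩
  have hspectralRadius : spectralRadius ℂ (M.map (algebraMap ℝ ℂ)) = ‖z‖₊ :=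
    le_antisymm (iSup₂_le fun w hw => mod_cast hmax w hw)
      (le_iSup₂ (f := fun w _ => (‖w‖₊ : ℝ≥0∞)) z hz)
  rw [hspecRad, hspectralRadius, ENNReal.coe_toReal, coe_nnnorm]

namespace Matrix

theorem mem_spectrum_iff_exists_mulVec_eq_smul {m K : Type*} [Fintype m] [DecidableEq m]
    [Field K] {X : Matrix m m K} {μ : K} : μ ∈ spectrum K X ↔ ∃ v ≠ 0, X *ᵥ v = μ • v := by
  rw [← spectrum_toLin', ← Module.End.hasEigenvalue_iff_mem_spectrum]
  constructor
  · intro h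
    obtain ⟨v, hv⟩ := h.exists_hasEigenvector
    exact ⟨v, hv.2, by simpa using hv.apply_eq_smul⟩
  · rintro ⟨v, hv, h⟩
    exact Module.End.hasEigenvalue_of_hasEigenvector
      ⟨Module.End.mem_eigenspace_iff.2 (by simpa using h), hv⟩

theorem spectrum_subset_of_mul_eq_mul {m p K : Type*} [Fintype m] [DecidableEq m] [Fintype p]
    [DecidableEq p] [Field K] {X : Matrix m m K} {P : Matrix m p K} {Y : Matrix p p K}
    (h : X * P = P * Y) (hP : Function.Injective P.mulVec) : spectrum K Y ⊆ spectrum K X := by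
  intro μ hμ
  obtain ⟨v, hv, hYv⟩ := mem_spectrum_iff_exists_mulVec_eq_smul.1 hμ
  refine mem_spectrum_iff_exists_mulVec_eq_smul.2 ⟨P *ᵥ v, fun h0 => hv (hP ?_), ?_⟩
  · rw [h0, mulVec_zero]
  · rw [mulVec_mulVec, h, ← mulVec_mulVec, hYv, mulVec_smul]

theorem pow_mul_eq_mul_pow {m p R : Type*} [Fintype m] [DecidableEq m] [Fintype p] [DecidableEq p]
    [Semiring R] {X : Matrix m m R} {P : Matrix m p R} {Y : Matrix p p R}
    (h : X * P = P * Y) (k : ℕ) : X ^ k * P = P * Y ^ k := by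
  induction k with
  | zero => simp
  | succ k ih =>
    rw [pow_succ, Matrix.mul_assoc, h, ← Matrix.mul_assoc, ih, pow_succ, Matrix.mul_assoc]

theorem linfty_opNNNorm_eq_nnnorm_mulVec_one {m n : Type*} [Fintype m] [Fintype n]
    {X : Matrix m n ℝ} (hX : ∀ i j, 0 ≤ X i j) : ‖X‖₊ = ‖X *ᵥ 1‖₊ := by
  rw [linfty_opNNNorm_def, Pi.nnnorm_def]
  congr 1
  ext i
  simp [mulVec, dotProduct, Real.nnnorm_of_nonneg (hX _ _),
    Real.nnnorm_of_nonneg (Finset.sum_nonneg fun j _ => hX i j)]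

theorem linfty_opNNNorm_map_ofReal {m n : Type*} [Fintype m] [Fintype n] (X : Matrix m n ℝ) :
    ‖X.map (algebraMap ℝ ℂ)‖₊ = ‖X‖₊ := by
  simp [linfty_opNNNorm_def, Complex.nnnorm_real]

def partitionMatrix {m p : Type*} (R : Type*) [DecidableEq p] [Zero R] [One R] (f : m → p) :
    Matrix m p R :=
  of fun i j => if f i = j then 1 else 0

theorem partitionMatrix_mulVec {m p R : Type*} [Fintype p] [DecidableEq p] [NonAssocSemiring R]
    (f : m → p) (v : p → R) : partitionMatrix R f *ᵥ v = v ∘ f := by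
  ext i
  simp [partitionMatrix, mulVec, dotProduct]

theorem map_partitionMatrix {m p R S : Type*} [DecidableEq p] [NonAssocSemiring R]
    [NonAssocSemiring S] (g : R →+* S) (f : m → p) :
    (partitionMatrix R f).map g = partitionMatrix S f := by
  ext i j
  simp [partitionMatrix, apply_ite g]

theorem fromBlocks_mul_partitionMatrix {m σ R : Type*} [Fintype m] [Fintype σ] [DecidableEq m]
    [Semiring R] (A : Matrix m m R) (b c : m → R) (d : R) (B : Matrix m σ R) (D : Matrix σ σ R)
    (hB : ∀ i, ∑ j, B i j = b i) (hD : ∀ i, ∑ j, D i j = d) :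
    fromBlocks A B (of fun _ j => c j) D *
        partitionMatrix R (Sum.map id fun _ => 0 : m ⊕ σ → m ⊕ Fin 1) =
      partitionMatrix R (Sum.map id fun _ => 0 : m ⊕ σ → m ⊕ Fin 1) *
        fromBlocks A (of fun i (_ : Fin 1) => b i) (of fun (_ : Fin 1) j => c j)
          (of fun _ _ => d) := by
  ext (i | i) (j | j) <;>
    simp [partitionMatrix, mul_apply, Fintype.sum_sum_type, Fin.fin_one_eq_zero, hB, hD]

theorem linfty_opNNNorm_le_of_mul_partitionMatrix {m p : Type*} [Fintype m] [DecidableEq m]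
    [Fintype p] [DecidableEq p] {f : m → p} {X : Matrix m m ℝ} {Y : Matrix p p ℝ}
    (hX : ∀ i j, 0 ≤ X i j) (h : X * partitionMatrix ℝ f = partitionMatrix ℝ f * Y) :
    ‖X‖₊ ≤ ‖Y‖₊ := by
  have hXone : X *ᵥ 1 = (Y *ᵥ 1) ∘ f :=
    calc X *ᵥ 1 = X *ᵥ (partitionMatrix ℝ f *ᵥ 1) := by rw [partitionMatrix_mulVec]; rfl
      _ = partitionMatrix ℝ f *ᵥ (Y *ᵥ 1) := by rw [mulVec_mulVec, h, ← mulVec_mulVec]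
      _ = (Y *ᵥ 1) ∘ f := partitionMatrix_mulVec _ _
  calc ‖X‖₊ = ‖(Y *ᵥ 1) ∘ f‖₊ := by rw [linfty_opNNNorm_eq_nnnorm_mulVec_one hX, hXone]
    _ ≤ ‖Y *ᵥ 1‖₊ := pi_nnnorm_le_iff.2 fun i => nnnorm_le_pi_nnnorm _ (f i)
    _ ≤ ‖Y‖₊ * ‖(1 : p → ℝ)‖₊ := linfty_opNNNorm_mulVec _ _
    _ ≤ ‖Y‖₊ := mul_le_of_le_one_right' ((pi_nnnorm_const_le (1 : ℝ)).trans_eq nnnorm_one)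

theorem specRad_eq_of_mul_partitionMatrix {m p : Type*} [Fintype m] [DecidableEq m] [Fintype p]
    [DecidableEq p] {f : m → p} (hf : Function.Surjective f) {X : Matrix m m ℝ}
    {Y : Matrix p p ℝ} (hX : ∀ i j, 0 ≤ X i j)
    (h : X * partitionMatrix ℝ f = partitionMatrix ℝ f * Y) : specRad X = specRad Y := by
  rw [specRad_eq_toReal_spectralRadius, specRad_eq_toReal_spectralRadius]
  congr 1
  apply le_antisymm
  · refine spectralRadius_le_of_nnnorm_pow_le fun k => ?_
    rw [← Matrix.map_pow, ← Matrix.map_pow, linfty_opNNNorm_map_ofReal, linfty_opNNNorm_map_ofReal]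
    exact linfty_opNNNorm_le_of_mul_partitionMatrix (pow_apply_nonneg hX k) (pow_mul_eq_mul_pow h k)
  · have hℂ : X.map (algebraMap ℝ ℂ) * partitionMatrix ℂ f =
        partitionMatrix ℂ f * Y.map (algebraMap ℝ ℂ) := by
      rw [← map_partitionMatrix (algebraMap ℝ ℂ), ← Matrix.map_mul, h, Matrix.map_mul]
    have hinj : Function.Injective (partitionMatrix ℂ f).mulVec := fun v w hvw => by
      rw [partitionMatrix_mulVec, partitionMatrix_mulVec] at hvw
      exact hf.injective_comp_right hvw
    exact biSup_mono (spectrum_subset_of_mul_eq_mul hℂ hinj)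

end Matrix

theorem rowSumExpansion_specRad_eq_general
    {n s : ℕ} (hs : 1 ≤ s)
    (A : Matrix (Fin n) (Fin n) ℝ) (b c : Fin n → ℝ) (d : ℝ)
    (hA : ∀ i j, 0 ≤ A i j) (hc : ∀ i, 0 ≤ c i)
    (B : Matrix (Fin n) (Fin s) ℝ) (hB : ∀ i j, 0 ≤ B i j)
    (hBrow : ∀ i, ∑ j, B i j = b i)
    (D : Matrix (Fin s) (Fin s) ℝ) (hD : ∀ i j, 0 ≤ D i j)
    (hDrow : ∀ i, ∑ j, D i j = d) :
    specRad (Matrix.fromBlocks A B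
        (Matrix.of fun (_ : Fin s) (j : Fin n) => c j) D) =
      specRad (Matrix.fromBlocks A
        (Matrix.of fun (i : Fin n) (_ : Fin 1) => b i)
        (Matrix.of fun (_ : Fin 1) (j : Fin n) => c j)
        (Matrix.of fun (_ : Fin 1) (_ : Fin 1) => d)) := by
  have hsurj : Function.Surjective (Sum.map id fun _ => 0 : Fin n ⊕ Fin s → Fin n ⊕ Fin 1) := by
    rintro (i | j)
    · exact ⟨.inl i, rfl⟩
    · exact ⟨.inr ⟨0, hs⟩, by rw [Fin.fin_one_eq_zero j]; rfl⟩
  have hnonneg : ∀ i j, 0 ≤ fromBlocks A B (of fun (_ : Fin s) (j : Fin n) => c j) D i j := by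
    rintro (i | i) (j | j)
    exacts [hA i j, hB i j, hc j, hD i j]
  exact specRad_eq_of_mul_partitionMatrix hsurj hnonneg
    (fromBlocks_mul_partitionMatrix A b c d B D hBrow hDrow)

/-- A row sum expansion of a nonnegative matrix on its last diagonal entry
preserves the spectral radius. -/
theorem rowSumExpansion_specRad_eq
    {n s : ℕ} (hn : 1 ≤ n) (hs : 1 ≤ s)
    (A : Matrix (Fin n) (Fin n) ℝ) (b c : Fin n → ℝ) (d : ℝ)
    (hA : ∀ i j, 0 ≤ A i j) (hb : ∀ i, 0 ≤ b i) (hc : ∀ i, 0 ≤ c i) (hd : 0 ≤ d)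
    (B : Matrix (Fin n) (Fin s) ℝ) (hB : ∀ i j, 0 ≤ B i j)
    (hBrow : ∀ i, ∑ j, B i j = b i)
    (D : Matrix (Fin s) (Fin s) ℝ) (hD : ∀ i j, 0 ≤ D i j)
    (hDrow : ∀ i, ∑ j, D i j = d) :
    specRad (Matrix.fromBlocks A B
        (Matrix.of fun (_ : Fin s) (j : Fin n) => c j) D) =
      specRad (Matrix.fromBlocks A
        (Matrix.of fun (i : Fin n) (_ : Fin 1) => b i)
        (Matrix.of fun (_ : Fin 1) (j : Fin n) => c j)
        (Matrix.of fun (_ : Fin 1) (_ : Fin 1) => d)) :=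
  rowSumExpansion_specRad_eq_general hs A b c d hA hc B hB hBrow D hD hDrow
end

section
/- Let k ≥ 1 and let s : Fin k → ℕ with s i ≥ 1 for all i. Let M̃ be a nonnegative real square matrix indexed by the sigma type Σ i, Fin (s i), partitioned into k² blocks where block (i,j) consists of the entries M̃ ((i,u),(j,v)) for u ∈ Fin (s i), v ∈ Fin (s j) (so the diagonal blocks are square). Suppose there is a k×k matrix m such that for every i, j and every row u ∈ Fin (s i), the row sum of block (i,j) at row u equals m i j, i.e. Σ_{v} M̃ ((i,u),(j,v)) = m i j. Then the spectral radius of M̃ equals the spectral radius of m. -/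
open Matrix
open scoped NNReal ENNReal

/-!
Constant block row sums are multiplicative, so every power `M ^ n` has block row sums `m ^ n`.
For nonnegative matrices the `ℓ∞` operator norm is the largest row sum, and when every block
is nonempty the row sums of `M ^ n` are exactly those of `m ^ n`; hence `‖M ^ n‖ = ‖m ^ n‖`
for all `n`, and Gelfand's formula gives equal spectral radii.
-/

namespace Matrix

variable {ι R : Type*} {α : ι → Type*} [∀ i, Fintype (α i)]

def HasBlockRowSums [AddCommMonoid R] (M : Matrix (Σ i, α i) (Σ i, α i) R) (m : Matrix ι ι R) :
    Prop :=
  ∀ i j (u : α i), ∑ v : α j, M ⟨i, u⟩ ⟨j, v⟩ = m i j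

namespace HasBlockRowSums

variable [Semiring R]

theorem one [DecidableEq ι] [∀ i, DecidableEq (α i)] :
    HasBlockRowSums (1 : Matrix (Σ i, α i) (Σ i, α i) R) (1 : Matrix ι ι R) := by
  intro i j u
  rcases eq_or_ne i j with rfl | h
  · simp [one_apply]
  · simp [h]

theorem mul [Fintype ι] {M N : Matrix (Σ i, α i) (Σ i, α i) R} {m n : Matrix ι ι R}
    (hM : HasBlockRowSums M m) (hN : HasBlockRowSums N n) : HasBlockRowSums (M * N) (m * n) := by
  intro i j u
  calc ∑ v : α j, (M * N) ⟨i, u⟩ ⟨j, v⟩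
      = ∑ l, ∑ w : α l, M ⟨i, u⟩ ⟨l, w⟩ * ∑ v : α j, N ⟨l, w⟩ ⟨j, v⟩ := by
        simp only [mul_apply, Finset.mul_sum]
        rw [Finset.sum_comm, ← Finset.univ_sigma_univ, Finset.sum_sigma]
    _ = ∑ l, m i l * n l j := by
        simp only [hN _ j, ← Finset.sum_mul, hM i]
    _ = (m * n) i j := (mul_apply ..).symm

theorem pow [Fintype ι] [DecidableEq ι] [∀ i, DecidableEq (α i)]
    {M : Matrix (Σ i, α i) (Σ i, α i) R} {m : Matrix ι ι R} (hM : HasBlockRowSums M m) (k : ℕ) :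
    HasBlockRowSums (M ^ k) (m ^ k) := by
  induction k with
  | zero => exact one
  | succ k ih => exact ih.mul hM

end HasBlockRowSums

end Matrix

theorem sSup_norm_image_spectrum_eq_toReal_spectralRadius {A : Type*} [NormedRing A]
    [NormedAlgebra ℂ A] [CompleteSpace A] (a : A) :
    sSup ((fun z : ℂ => ‖z‖) '' spectrum ℂ a) = (spectralRadius ℂ a).toReal := by
  rcases (spectrum ℂ a).eq_empty_or_nonempty with hσ | hσ
  · simp [spectralRadius, hσ]
  obtain ⟨μ, hμ, hμr⟩ := spectrum.exists_nnnorm_eq_spectralRadius_of_nonempty hσ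
  have hgreatest : IsGreatest ((fun z : ℂ => ‖z‖) '' spectrum ℂ a) ‖μ‖ := by
    refine ⟨⟨μ, hμ, rfl⟩, ?_⟩
    rintro _ ⟨z, hz, rfl⟩
    have : (‖z‖₊ : ℝ≥0∞) ≤ ‖μ‖₊ :=
      hμr ▸ le_iSup₂ (f := fun z (_ : z ∈ spectrum ℂ a) => (‖z‖₊ : ℝ≥0∞)) z hz
    exact_mod_cast this
  rw [hgreatest.csSup_eq, ← hμr]
  rfl

section LinftyOpNorm

attribute [local instance] Matrix.linftyOpNormedAddCommGroup Matrix.linftyOpNormedRing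
  Matrix.linftyOpNormedAlgebra

namespace Matrix

variable {ι : Type*} {α : ι → Type*} [∀ i, Fintype (α i)]

theorem linfty_opNNNorm_map_algebraMap {m n : Type*} [Fintype m] [Fintype n]
    (A : Matrix m n ℝ) : ‖A.map (algebraMap ℝ ℂ)‖₊ = ‖A‖₊ := by
  simp only [linfty_opNNNorm_def, map_apply, Complex.coe_algebraMap, Complex.nnnorm_real]

theorem HasBlockRowSums.linfty_opNNNorm_eq [Fintype ι] [∀ i, Nonempty (α i)]
    {M : Matrix (Σ i, α i) (Σ i, α i) ℝ} {m : Matrix ι ι ℝ} (hM : HasBlockRowSums M m)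
    (hM₀ : ∀ p q, 0 ≤ M p q) : ‖M‖₊ = ‖m‖₊ := by
  have hrow : ∀ i (u : α i), ∑ q, ‖M ⟨i, u⟩ q‖₊ = ∑ j, ‖m i j‖₊ := by
    intro i u
    rw [← Finset.univ_sigma_univ, Finset.sum_sigma]
    refine Finset.sum_congr rfl fun j _ => NNReal.eq ?_
    push_cast [coe_nnnorm, ← hM i j u]
    rw [Real.norm_of_nonneg (Finset.sum_nonneg fun v _ => hM₀ _ _)]
    exact Finset.sum_congr rfl fun v _ => Real.norm_of_nonneg (hM₀ _ _)
  have hfst : Function.Surjective (Sigma.fst : (Σ i, α i) → ι) :=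
    fun i => ⟨⟨i, Classical.arbitrary (α i)⟩, rfl⟩
  classical
  rw [linfty_opNNNorm_def, linfty_opNNNorm_def]
  calc Finset.univ.sup (fun p => ∑ q, ‖M p q‖₊)
      = Finset.univ.sup ((fun i => ∑ j, ‖m i j‖₊) ∘ Sigma.fst) :=
        Finset.sup_congr rfl fun ⟨i, u⟩ _ => hrow i u
    _ = _ := by rw [← Finset.sup_image, Finset.image_univ_of_surjective hfst]

end Matrix

theorem specRad_eq_of_forall_linfty_opNNNorm_pow_eq {m n : Type*} [Fintype m] [DecidableEq m]
    [Fintype n] [DecidableEq n] {A : Matrix m m ℝ} {B : Matrix n n ℝ}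
    (h : ∀ k : ℕ, ‖A ^ k‖₊ = ‖B ^ k‖₊) : specRad A = specRad B := by
  have hpow : ∀ k : ℕ, ‖A.map (algebraMap ℝ ℂ) ^ k‖₊ = ‖B.map (algebraMap ℝ ℂ) ^ k‖₊ := by
    intro k
    rw [← Matrix.map_pow, ← Matrix.map_pow, linfty_opNNNorm_map_algebraMap,
      linfty_opNNNorm_map_algebraMap, h]
  have hgelfand := spectrum.pow_nnnorm_pow_one_div_tendsto_nhds_spectralRadius
    (B.map (algebraMap ℝ ℂ))
  simp_rw [← hpow] at hgelfand
  rw [specRad, specRad, sSup_norm_image_spectrum_eq_toReal_spectralRadius,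
    sSup_norm_image_spectrum_eq_toReal_spectralRadius,
    tendsto_nhds_unique (spectrum.pow_nnnorm_pow_one_div_tendsto_nhds_spectralRadius _) hgelfand]

end LinftyOpNorm

theorem blockConstRowSums_specRad_eq_general
    {k : ℕ} (s : Fin k → ℕ) (hs : ∀ i, 1 ≤ s i)
    (M : Matrix (Σ i, Fin (s i)) (Σ i, Fin (s i)) ℝ)
    (hM : ∀ p q, 0 ≤ M p q)
    (m : Matrix (Fin k) (Fin k) ℝ)
    (hrow : ∀ (i j : Fin k) (u : Fin (s i)),
      ∑ v : Fin (s j), M ⟨i, u⟩ ⟨j, v⟩ = m i j) :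
    specRad M = specRad m := by
  have : ∀ i, Nonempty (Fin (s i)) := fun i => Fin.pos_iff_nonempty.mp (hs i)
  have hblock : HasBlockRowSums M m := hrow
  exact specRad_eq_of_forall_linfty_opNNNorm_pow_eq fun n =>
    (hblock.pow n).linfty_opNNNorm_eq (pow_apply_nonneg hM n)

/-- If a nonnegative block matrix (with square diagonal blocks) has constant row
sums `m i j` in each block `(i,j)`, then its spectral radius equals the spectral
radius of the matrix `m` of block row sums. -/
theorem blockConstRowSums_specRad_eq
    {k : ℕ} (hk : 1 ≤ k) (s : Fin k → ℕ) (hs : ∀ i, 1 ≤ s i)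
    (M : Matrix (Σ i, Fin (s i)) (Σ i, Fin (s i)) ℝ)
    (hM : ∀ p q, 0 ≤ M p q)
    (m : Matrix (Fin k) (Fin k) ℝ)
    (hrow : ∀ (i j : Fin k) (u : Fin (s i)),
      ∑ v : Fin (s j), M ⟨i, u⟩ ⟨j, v⟩ = m i j) :
    specRad M = specRad m :=
  blockConstRowSums_specRad_eq_general s hs M hM m hrow
end

section
/- Let k ≥ 1 and let s : Fin k → ℕ with s i ≥ 1 for all i. Let M be a nonnegative real square matrix indexed by Σ i, Fin (s i), partitioned into k² blocks with square diagonal blocks. Define the downward row sum contraction M↓ as the k×k matrix with entries M↓ i j = min over u ∈ Fin (s i) of Σ_{v ∈ Fin (s j)} M ((i,u),(j,v)) (the minimum row sum within block (i,j)). Then ρ(M↓) ≤ ρ(M). -/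
open Matrix

/-!
Taking minimal block row sums is supermultiplicative on nonnegative matrices:
`M↓ * N↓ ≤ (M * N)↓` entrywise, since each row sum of a block of `M * N` is a nonnegative
combination of row sums of blocks of `N`. Hence `(M↓) ^ m ≤ (M ^ m)↓` entrywise. In the
max-row-sum operator norm, every row sum of `(M ^ m)↓` is bounded by a row sum of `M ^ m`,
so `‖(M↓) ^ m‖ ≤ ‖M ^ m‖` for all `m ≥ 1`, and Gelfand's formula
`ρ(A) = lim ‖A ^ m‖ ^ (1 / m)` gives `ρ(M↓) ≤ ρ(M)`.
-/

open Filter Finset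
open scoped ENNReal

theorem spectrum.spectralRadius_le_of_eventually_norm_pow_le {A B : Type*}
    [NormedRing A] [NormedAlgebra ℂ A] [CompleteSpace A]
    [NormedRing B] [NormedAlgebra ℂ B] [CompleteSpace B] {a : A} {b : B}
    (h : ∀ᶠ n in atTop, ‖a ^ n‖ ≤ ‖b ^ n‖) :
    spectralRadius ℂ a ≤ spectralRadius ℂ b :=
  le_of_tendsto_of_tendsto (pow_nnnorm_pow_one_div_tendsto_nhds_spectralRadius a)
    (pow_nnnorm_pow_one_div_tendsto_nhds_spectralRadius b) <|
      h.mono fun n hn => by dsimp only; gcongr; exact_mod_cast hn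

section specRad

variable {n : Type*} [Fintype n] [DecidableEq n]

theorem specRad_nonneg (M : Matrix n n ℝ) : 0 ≤ specRad M :=
  Real.sSup_nonneg <| by rintro _ ⟨z, -, rfl⟩; exact norm_nonneg z

theorem ofReal_specRad (M : Matrix n n ℝ) :
    ENNReal.ofReal (specRad M) = spectralRadius ℂ (M.map (algebraMap ℝ ℂ)) := by
  rw [specRad, spectralRadius]
  set σ := spectrum ℂ (M.map (algebraMap ℝ ℂ))
  rcases σ.eq_empty_or_nonempty with hσ | hσ
  · simp [hσ]
  obtain ⟨z, hz, hmax⟩ := σ.exists_max_image (‖·‖) (Matrix.finite_spectrum _) hσ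
  have hspec : sSup ((‖·‖) '' σ) = ‖z‖ :=
    IsGreatest.csSup_eq ⟨⟨z, hz, rfl⟩, by rintro _ ⟨w, hw, rfl⟩; exact hmax w hw⟩
  rw [hspec, ofReal_norm, enorm_eq_nnnorm]
  exact le_antisymm (le_iSup₂ (f := fun w (_ : w ∈ σ) => (‖w‖₊ : ℝ≥0∞)) z hz)
    (iSup₂_le fun w hw => by exact_mod_cast hmax w hw)

end specRad

namespace Matrix

attribute [local instance] Matrix.linftyOpSeminormedAddCommGroup

theorem linfty_opNorm_le_of_forall_exists_rowSum_le {m m' n n' E : Type*}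
    [Fintype m] [Fintype m'] [Fintype n] [Fintype n'] [SeminormedAddCommGroup E]
    {A : Matrix m n E} {B : Matrix m' n' E}
    (h : ∀ i, ∃ i', ∑ j, ‖A i j‖ ≤ ∑ j, ‖B i' j‖) : ‖A‖ ≤ ‖B‖ := by
  simp only [linfty_opNorm_def, NNReal.coe_le_coe]
  refine Finset.sup_le fun i _ => ?_
  obtain ⟨i', hi'⟩ := h i
  refine le_trans ?_ (Finset.le_sup (mem_univ i'))
  rw [← NNReal.coe_le_coe]
  push_cast
  exact hi'

theorem linfty_opNorm_le_of_nonneg_of_le {m n : Type*} [Fintype m] [Fintype n]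
    {A B : Matrix m n ℝ} (hA : ∀ i j, 0 ≤ A i j) (hAB : ∀ i j, A i j ≤ B i j) :
    ‖A‖ ≤ ‖B‖ :=
  linfty_opNorm_le_of_forall_exists_rowSum_le fun i => ⟨i, sum_le_sum fun j _ => by
    rw [Real.norm_of_nonneg (hA i j), Real.norm_of_nonneg ((hA i j).trans (hAB i j))]
    exact hAB i j⟩

theorem linfty_opNorm_map_algebraMap {m n : Type*} [Fintype m] [Fintype n]
    (A : Matrix m n ℝ) : ‖A.map (algebraMap ℝ ℂ)‖ = ‖A‖ := by
  simp [linfty_opNorm_def]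

theorem sum_mul_apply_comp {m n o κ R : Type*} [NonUnitalNonAssocSemiring R] [Fintype n]
    [Fintype κ] (A : Matrix m n R) (B : Matrix n o R) (p : m) (f : κ → o) :
    ∑ v, (A * B) p (f v) = ∑ q, A p q * ∑ v, B q (f v) := by
  simp only [mul_apply, mul_sum]
  exact sum_comm

section DownwardRowSumContraction

variable {ι : Type*} {α : ι → Type*} [∀ i, Fintype (α i)] [∀ i, Nonempty (α i)]
  {R : Type*} [Semiring R] [LinearOrder R]

def downwardRowSumContraction (M : Matrix (Σ i, α i) (Σ i, α i) R) : Matrix ι ι R :=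
  of fun i j => univ.inf' univ_nonempty fun u => ∑ v, M ⟨i, u⟩ ⟨j, v⟩

variable {A B M : Matrix (Σ i, α i) (Σ i, α i) R}

theorem downwardRowSumContraction_apply_le (i j : ι) (u : α i) :
    downwardRowSumContraction M i j ≤ ∑ v, M ⟨i, u⟩ ⟨j, v⟩ :=
  inf'_le _ (mem_univ u)

variable [IsOrderedRing R]

theorem downwardRowSumContraction_nonneg (hM : ∀ p q, 0 ≤ M p q) (i j : ι) :
    0 ≤ downwardRowSumContraction M i j :=
  le_inf' univ_nonempty _ fun _ _ => sum_nonneg fun _ _ => hM _ _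

variable [Fintype ι]

theorem downwardRowSumContraction_mul_le (hA : ∀ p q, 0 ≤ A p q) (hB : ∀ p q, 0 ≤ B p q)
    (i j : ι) :
    (downwardRowSumContraction A * downwardRowSumContraction B) i j ≤
      downwardRowSumContraction (A * B) i j := by
  refine le_inf' univ_nonempty _ fun u _ => ?_
  rw [sum_mul_apply_comp, ← univ_sigma_univ, sum_sigma, mul_apply]
  refine sum_le_sum fun l _ => ?_
  calc downwardRowSumContraction A i l * downwardRowSumContraction B l j
      ≤ (∑ w, A ⟨i, u⟩ ⟨l, w⟩) * downwardRowSumContraction B l j := by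
        gcongr
        · exact downwardRowSumContraction_nonneg hB l j
        · exact downwardRowSumContraction_apply_le i l u
    _ ≤ ∑ w, A ⟨i, u⟩ ⟨l, w⟩ * ∑ v, B ⟨l, w⟩ ⟨j, v⟩ := by
        rw [sum_mul]
        gcongr with w
        · exact hA _ _
        · exact downwardRowSumContraction_apply_le l j w

theorem downwardRowSumContraction_pow_le [DecidableEq ι] [∀ i, DecidableEq (α i)]
    (hM : ∀ p q, 0 ≤ M p q) {m : ℕ} (hm : 1 ≤ m) (i j : ι) :
    (downwardRowSumContraction M ^ m) i j ≤ downwardRowSumContraction (M ^ m) i j := by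
  induction m, hm using Nat.le_induction generalizing i j with
  | base => simp
  | succ m hm ih =>
    calc (downwardRowSumContraction M ^ (m + 1)) i j
        ≤ (downwardRowSumContraction (M ^ m) * downwardRowSumContraction M) i j := by
          rw [pow_succ, mul_apply, mul_apply]
          gcongr with l
          · exact downwardRowSumContraction_nonneg hM l j
          · exact ih i l
      _ ≤ downwardRowSumContraction (M ^ (m + 1)) i j := by
          rw [pow_succ]
          exact downwardRowSumContraction_mul_le (pow_apply_nonneg hM m) hM i j

end DownwardRowSumContraction

theorem linfty_opNorm_downwardRowSumContraction_le {ι : Type*} [Fintype ι] {α : ι → Type*}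
    [∀ i, Fintype (α i)] [∀ i, Nonempty (α i)] {M : Matrix (Σ i, α i) (Σ i, α i) ℝ}
    (hM : ∀ p q, 0 ≤ M p q) : ‖downwardRowSumContraction M‖ ≤ ‖M‖ := by
  refine linfty_opNorm_le_of_forall_exists_rowSum_le fun i => ?_
  obtain ⟨u⟩ := ‹∀ i, Nonempty (α i)› i
  refine ⟨⟨i, u⟩, ?_⟩
  calc ∑ j, ‖downwardRowSumContraction M i j‖ = ∑ j, downwardRowSumContraction M i j :=
        sum_congr rfl fun j _ => Real.norm_of_nonneg (downwardRowSumContraction_nonneg hM i j)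
    _ ≤ ∑ j, ∑ v, M ⟨i, u⟩ ⟨j, v⟩ :=
        sum_le_sum fun j _ => downwardRowSumContraction_apply_le i j u
    _ = ∑ q, ‖M ⟨i, u⟩ q‖ := by
        rw [← univ_sigma_univ, sum_sigma]
        simp only [Real.norm_of_nonneg (hM _ _)]

end Matrix

attribute [local instance] Matrix.linftyOpNormedRing Matrix.linftyOpNormedAlgebra

theorem Matrix.linfty_opNorm_downwardRowSumContraction_pow_le {ι : Type*} [Fintype ι]
    [DecidableEq ι] {α : ι → Type*} [∀ i, Fintype (α i)] [∀ i, DecidableEq (α i)]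
    [∀ i, Nonempty (α i)] {M : Matrix (Σ i, α i) (Σ i, α i) ℝ} (hM : ∀ p q, 0 ≤ M p q)
    {m : ℕ} (hm : 1 ≤ m) :
    ‖downwardRowSumContraction M ^ m‖ ≤ ‖M ^ m‖ :=
  (linfty_opNorm_le_of_nonneg_of_le (pow_apply_nonneg (downwardRowSumContraction_nonneg hM) m)
    (downwardRowSumContraction_pow_le hM hm)).trans
    (linfty_opNorm_downwardRowSumContraction_le (pow_apply_nonneg hM m))

theorem downwardRowSumContraction_specRad_le_general
    {k : ℕ} (s : Fin k → ℕ) (hs : ∀ i, 1 ≤ s i)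
    (M : Matrix (Σ i, Fin (s i)) (Σ i, Fin (s i)) ℝ)
    (hM : ∀ p q, 0 ≤ M p q) :
    specRad (Matrix.of fun (i j : Fin k) =>
      Finset.univ.inf'
        (Finset.univ_nonempty_iff.mpr (Fin.pos_iff_nonempty.mp (hs i)))
        (fun u : Fin (s i) => ∑ v : Fin (s j), M ⟨i, u⟩ ⟨j, v⟩)) ≤
      specRad M := by
  have (i : Fin k) : Nonempty (Fin (s i)) := Fin.pos_iff_nonempty.mp (hs i)
  change specRad (downwardRowSumContraction M) ≤ specRad M
  rw [← ENNReal.ofReal_le_ofReal_iff (specRad_nonneg M), ofReal_specRad, ofReal_specRad]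
  refine spectrum.spectralRadius_le_of_eventually_norm_pow_le ?_
  filter_upwards [eventually_ge_atTop 1] with m hm
  simp only [← Matrix.map_pow, linfty_opNorm_map_algebraMap]
  exact linfty_opNorm_downwardRowSumContraction_pow_le hM hm

/-- The spectral radius of the downward row sum contraction (minimum row sum in
each block, with square diagonal blocks) is at most the spectral radius of the
original nonnegative matrix. -/
theorem downwardRowSumContraction_specRad_le
    {k : ℕ} (hk : 1 ≤ k) (s : Fin k → ℕ) (hs : ∀ i, 1 ≤ s i)
    (M : Matrix (Σ i, Fin (s i)) (Σ i, Fin (s i)) ℝ)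
    (hM : ∀ p q, 0 ≤ M p q) :
    specRad (Matrix.of fun (i j : Fin k) =>
      Finset.univ.inf'
        (Finset.univ_nonempty_iff.mpr (Fin.pos_iff_nonempty.mp (hs i)))
        (fun u : Fin (s i) => ∑ v : Fin (s j), M ⟨i, u⟩ ⟨j, v⟩)) ≤
      specRad M :=
  downwardRowSumContraction_specRad_le_general s hs M hM
end

section
/- Let M be a nonnegative real square matrix indexed by Fin s₁ ⊕ Fin s₂ with s₁, s₂ ≥ 1, partitioned into four blocks with square diagonal blocks. Let A be the 2×2 matrix whose (i,j) entry a_{ij} is the minimum row sum within block (i,j) of M. Then ρ(M) ≥ tr(A)/2 + √((tr(A)/2)² − det(A)). -/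
open Matrix

/-!
Collatz–Wielandt bound: if `r • z ≤ N *ᵥ z` for a nonnegative matrix `N` and a nonzero `z ≥ 0`,
then iterating gives `r ^ k ≤ ‖N ^ k‖` in the `ℓ∞` operator norm, and Gelfand's formula turns
this into `r ≤ ρ(N)`. The larger root `λ = tr A / 2 + √((tr A / 2)² - det A)` of the
characteristic polynomial of the nonnegative `2 × 2` matrix `A` has a nonzero `y ≥ 0` with
`λ • y ≤ A *ᵥ y` (an eigenvector, except in a degenerate case). The vector equal to `y i` on the
`i`-th block is such a `z` for `M` and `r = λ`, since every row sum within block `(i, j)` of `M`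
dominates `A i j`.
-/

open Filter

open scoped ENNReal NNReal

theorem spectrum.le_spectralRadius_of_forall_pow_le_nnnorm {A : Type*} [NormedRing A]
    [NormedAlgebra ℂ A] [CompleteSpace A] (a : A) {r : ℝ≥0} (h : ∀ k, r ^ k ≤ ‖a ^ k‖₊) :
    (r : ℝ≥0∞) ≤ spectralRadius ℂ a := by
  refine ge_of_tendsto (spectrum.pow_nnnorm_pow_one_div_tendsto_nhds_spectralRadius a) ?_
  filter_upwards [eventually_ne_atTop 0] with k hk
  calc (r : ℝ≥0∞) = ((r : ℝ≥0∞) ^ k) ^ (1 / k : ℝ) := by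
        rw [one_div, ENNReal.pow_rpow_inv_natCast hk]
    _ ≤ (‖a ^ k‖₊ : ℝ≥0∞) ^ (1 / k : ℝ) :=
        ENNReal.rpow_le_rpow (mod_cast h k) (by positivity)

namespace Matrix

variable {n : Type*} [Fintype n]

theorem mulVec_mono_of_nonneg {N : Matrix n n ℝ} (hN : ∀ p q, 0 ≤ N p q) {x y : n → ℝ}
    (h : x ≤ y) : N *ᵥ x ≤ N *ᵥ y := fun p =>
  Finset.sum_le_sum fun q _ => mul_le_mul_of_nonneg_left (h q) (hN p q)

theorem pow_smul_le_pow_mulVec [DecidableEq n] {N : Matrix n n ℝ} (hN : ∀ p q, 0 ≤ N p q) {r : ℝ}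
    (hr : 0 ≤ r) {z : n → ℝ} (h : r • z ≤ N *ᵥ z) (k : ℕ) : r ^ k • z ≤ (N ^ k) *ᵥ z := by
  induction k with
  | zero => simp
  | succ k ih =>
    calc r ^ (k + 1) • z = r ^ k • (r • z) := by rw [pow_succ, mul_smul]
      _ ≤ r ^ k • (N *ᵥ z) := smul_le_smul_of_nonneg_left h (pow_nonneg hr k)
      _ = N *ᵥ (r ^ k • z) := (mulVec_smul N _ z).symm
      _ ≤ N *ᵥ ((N ^ k) *ᵥ z) := mulVec_mono_of_nonneg hN ih
      _ = (N ^ (k + 1)) *ᵥ z := by rw [mulVec_mulVec, pow_succ']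

attribute [local instance] Matrix.linftyOpNormedAddCommGroup Matrix.linftyOpNormedRing
  Matrix.linftyOpNormedAlgebra

theorem le_linftyOpNorm_of_smul_le_mulVec {B : Matrix n n ℝ} {r : ℝ} {z : n → ℝ}
    (hr : 0 ≤ r) (hz : 0 ≤ z) (hz0 : z ≠ 0) (h : r • z ≤ B *ᵥ z) : r ≤ ‖B‖ := by
  have hsup : ‖r • z‖ ≤ ‖B *ᵥ z‖ :=
    (pi_norm_le_iff_of_nonneg (norm_nonneg _)).2 fun p => by
      rw [Real.norm_of_nonneg (smul_nonneg hr hz p)]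
      exact (h p).trans ((le_abs_self _).trans (norm_le_pi_norm (B *ᵥ z) p))
  refine le_of_mul_le_mul_right ?_ (norm_pos_iff.2 hz0)
  calc r * ‖z‖ = ‖r • z‖ := by rw [norm_smul, Real.norm_of_nonneg hr]
    _ ≤ ‖B *ᵥ z‖ := hsup
    _ ≤ ‖B‖ * ‖z‖ := linfty_opNorm_mulVec B z

theorem linfty_opNNNorm_map_algebraMap_s6 [DecidableEq n] (N : Matrix n n ℝ) :
    ‖N.map (algebraMap ℝ ℂ)‖₊ = ‖N‖₊ := by
  simp [linfty_opNNNorm_def, Complex.nnnorm_real]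

theorem specRad_nonneg [DecidableEq n] [Nonempty n] (N : Matrix n n ℝ) : 0 ≤ specRad N := by
  obtain ⟨μ, hμ⟩ := spectrum.nonempty (N.map (algebraMap ℝ ℂ))
  exact (norm_nonneg μ).trans
    (le_csSup ((finite_spectrum _).image _).bddAbove ⟨μ, hμ, rfl⟩)

theorem spectralRadius_map_le_ofReal_specRad [DecidableEq n] (N : Matrix n n ℝ) :
    spectralRadius ℂ (N.map (algebraMap ℝ ℂ)) ≤ ENNReal.ofReal (specRad N) :=
  iSup₂_le fun μ hμ => by
    rw [← enorm_eq_nnnorm, ← ofReal_norm]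
    exact ENNReal.ofReal_le_ofReal
      (le_csSup ((finite_spectrum _).image _).bddAbove ⟨μ, hμ, rfl⟩)

theorem le_specRad_of_smul_le_mulVec [DecidableEq n] {N : Matrix n n ℝ}
    (hN : ∀ p q, 0 ≤ N p q) {r : ℝ} {z : n → ℝ} (hz : 0 ≤ z) (hz0 : z ≠ 0)
    (h : r • z ≤ N *ᵥ z) : r ≤ specRad N := by
  have : Nonempty n := let ⟨p, _⟩ := Function.ne_iff.1 hz0; ⟨p⟩
  rcases le_or_gt r 0 with hr | hr
  · exact hr.trans (specRad_nonneg N)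
  have hpow (k : ℕ) : r.toNNReal ^ k ≤ ‖N.map (algebraMap ℝ ℂ) ^ k‖₊ := by
    rw [← NNReal.coe_le_coe, ← Matrix.map_pow, linfty_opNNNorm_map_algebraMap_s6, NNReal.coe_pow,
      Real.coe_toNNReal r hr.le, coe_nnnorm]
    exact le_linftyOpNorm_of_smul_le_mulVec (pow_nonneg hr.le k) hz hz0
      (pow_smul_le_pow_mulVec hN hr.le h k)
  rw [← ENNReal.ofReal_le_ofReal_iff (specRad_nonneg N)]
  exact (spectrum.le_spectralRadius_of_forall_pow_le_nnnorm _ hpow).trans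
    (spectralRadius_map_le_ofReal_specRad N)

def blockRowSum {m ι α : Type*} [AddCommMonoid α] [DecidableEq ι] (M : Matrix m n α)
    (b : n → ι) (p : m) (j : ι) : α :=
  ∑ q with b q = j, M p q

theorem comp_mulVec_le_mulVec_comp {ι : Type*} [Fintype ι] [DecidableEq ι] {M : Matrix n n ℝ}
    {b : n → ι} {A : Matrix ι ι ℝ} (hA : ∀ p j, A (b p) j ≤ blockRowSum M b p j)
    {y : ι → ℝ} (hy : 0 ≤ y) : (A *ᵥ y) ∘ b ≤ M *ᵥ (y ∘ b) := fun p =>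
  calc (A *ᵥ y) (b p) = ∑ j, A (b p) j * y j := rfl
    _ ≤ ∑ j, blockRowSum M b p j * y j :=
        Finset.sum_le_sum fun j _ => mul_le_mul_of_nonneg_right (hA p j) (hy j)
    _ = ∑ j, ∑ q with b q = j, M p q * y (b q) := by
        simp only [blockRowSum, Finset.sum_mul]
        exact Finset.sum_congr rfl fun j _ => Finset.sum_congr rfl fun q hq => by
          rw [(Finset.mem_filter.1 hq).2]
    _ = (M *ᵥ (y ∘ b)) p := Finset.sum_fiberwise _ _ _

theorem exists_nonneg_smul_le_mulVec_fin_two {A : Matrix (Fin 2) (Fin 2) ℝ}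
    (hA : ∀ i j, 0 ≤ A i j) : ∃ y : Fin 2 → ℝ, 0 ≤ y ∧ y ≠ 0 ∧
      (A.trace / 2 + √((A.trace / 2) ^ 2 - A.det)) • y ≤ A *ᵥ y := by
  have hbc : 0 ≤ A 0 1 * A 1 0 := mul_nonneg (hA 0 1) (hA 1 0)
  have hdisc : (A.trace / 2) ^ 2 - A.det = ((A 0 0 - A 1 1) / 2) ^ 2 + A 0 1 * A 1 0 := by
    rw [trace_fin_two, det_fin_two]; ring
  have hs_sq : √((A.trace / 2) ^ 2 - A.det) ^ 2 = ((A 0 0 - A 1 1) / 2) ^ 2 + A 0 1 * A 1 0 := by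
    rw [hdisc, Real.sq_sqrt (by positivity)]
  have hs_ge : |(A 0 0 - A 1 1) / 2| ≤ √((A.trace / 2) ^ 2 - A.det) := by
    rw [hdisc]; exact Real.abs_le_sqrt (le_add_of_nonneg_right hbc)
  rw [trace_fin_two] at hs_sq hs_ge ⊢
  set r := (A 0 0 + A 1 1) / 2 + √(((A 0 0 + A 1 1) / 2) ^ 2 - A.det) with hr
  have ha_le : A 0 0 ≤ r := by linarith [(abs_le.1 hs_ge).2]
  have hd_le : A 1 1 ≤ r := by linarith [(abs_le.1 hs_ge).1]
  have hroot : (r - A 0 0) * (r - A 1 1) = A 0 1 * A 1 0 := by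
    rw [hr]; linear_combination hs_sq
  -- `![A 0 1, r - A 0 0]` is an eigenvector for `r` unless it vanishes
  by_cases hdeg : A 0 1 = 0 ∧ r = A 0 0
  · refine ⟨![1, 0], fun i => by fin_cases i <;> simp, fun h => by simpa using congrFun h 0, ?_⟩
    intro i
    fin_cases i <;> simp [mulVec, dotProduct, Fin.sum_univ_two, hdeg.2, hA 1 0]
  · refine ⟨![A 0 1, r - A 0 0], fun i => ?_, fun h => hdeg ?_, fun i => ?_⟩
    · fin_cases i <;> simp [hA 0 1, ha_le]
    · have h1 : r - A 0 0 = 0 := by simpa using congrFun h 1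
      exact ⟨by simpa using congrFun h 0, by linarith⟩
    · fin_cases i <;> simp [mulVec, dotProduct, Fin.sum_univ_two] <;> nlinarith

end Matrix

/-- Lower bound on the spectral radius from a `2 × 2` downward row sum
contraction: if `A` is the `2 × 2` matrix of minimum block row sums of the
nonnegative matrix `M` (square diagonal blocks), then
`tr(A)/2 + √((tr(A)/2)² − det A) ≤ ρ(M)`. -/
theorem twoByTwo_downwardContraction_le_specRad
    {s₁ s₂ : ℕ} (hs₁ : 1 ≤ s₁) (hs₂ : 1 ≤ s₂)
    (M : Matrix (Fin s₁ ⊕ Fin s₂) (Fin s₁ ⊕ Fin s₂) ℝ)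
    (hM : ∀ p q, 0 ≤ M p q)
    (A : Matrix (Fin 2) (Fin 2) ℝ)
    (hA00 : A 0 0 = Finset.univ.inf'
      (Finset.univ_nonempty_iff.mpr (Fin.pos_iff_nonempty.mp hs₁))
      (fun u : Fin s₁ => ∑ v : Fin s₁, M (Sum.inl u) (Sum.inl v)))
    (hA01 : A 0 1 = Finset.univ.inf'
      (Finset.univ_nonempty_iff.mpr (Fin.pos_iff_nonempty.mp hs₁))
      (fun u : Fin s₁ => ∑ v : Fin s₂, M (Sum.inl u) (Sum.inr v)))
    (hA10 : A 1 0 = Finset.univ.inf'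
      (Finset.univ_nonempty_iff.mpr (Fin.pos_iff_nonempty.mp hs₂))
      (fun u : Fin s₂ => ∑ v : Fin s₁, M (Sum.inr u) (Sum.inl v)))
    (hA11 : A 1 1 = Finset.univ.inf'
      (Finset.univ_nonempty_iff.mpr (Fin.pos_iff_nonempty.mp hs₂))
      (fun u : Fin s₂ => ∑ v : Fin s₂, M (Sum.inr u) (Sum.inr v))) :
    A.trace / 2 + Real.sqrt ((A.trace / 2) ^ 2 - A.det) ≤ specRad M := by
  let b : Fin s₁ ⊕ Fin s₂ → Fin 2 := Sum.elim (fun _ => 0) (fun _ => 1)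
  have hA_nonneg : ∀ i j, 0 ≤ A i j := by
    intro i j
    fin_cases i <;> fin_cases j <;> simp only [Fin.zero_eta, Fin.mk_one, hA00, hA01, hA10, hA11] <;>
      exact Finset.le_inf' _ _ fun u _ => Finset.sum_nonneg fun v _ => hM _ _
  have hA_le : ∀ p j, A (b p) j ≤ blockRowSum M b p j := by
    rintro (u | u) j <;> fin_cases j <;>
      simp only [b, blockRowSum, Finset.sum_filter, Fintype.sum_sum_type, Sum.elim_inl,
        Sum.elim_inr, Fin.zero_eta, Fin.mk_one, one_ne_zero, zero_ne_one, if_true, if_false,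
        Finset.sum_const_zero, add_zero, zero_add, hA00, hA01, hA10, hA11] <;>
      exact Finset.inf'_le _ (Finset.mem_univ u)
  have hb : Function.Surjective b := fun i => by
    fin_cases i
    exacts [⟨Sum.inl ⟨0, hs₁⟩, rfl⟩, ⟨Sum.inr ⟨0, hs₂⟩, rfl⟩]
  obtain ⟨y, hy, hy0, hAy⟩ := exists_nonneg_smul_le_mulVec_fin_two hA_nonneg
  refine le_specRad_of_smul_le_mulVec hM (fun p => hy (b p))
    (fun h => hy0 (hb.injective_comp_right h)) ?_
  calc _ = (_ • y) ∘ b := rfl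
    _ ≤ (A *ᵥ y) ∘ b := fun p => hAy (b p)
    _ ≤ M *ᵥ (y ∘ b) := comp_mulVec_le_mulVec_comp hA_le hy
end

section
/- Let n, s ≥ 1. Let A be a nonnegative n×n real matrix, b and c nonnegative vectors in ℝⁿ, and d ≥ 0, and let M = [[A, b],[cᵀ, d]]. Let B be a nonnegative n×s matrix whose i-th row sum equals b_i for every i, let C be the s×n matrix each of whose rows equals cᵀ, and let D be a nonnegative s×s matrix all of whose row sums equal d; set M̃ = [[A, B],[C, D]]. If λ ∈ ℝ and (x̃, ỹ) ∈ ℝⁿ × ℝˢ is nonnegative, nonzero, and satisfies the left-eigenvector equation (x̃ᵀ, ỹᵀ) M̃ = λ (x̃ᵀ, ỹᵀ), then the vector (x̃, Σᵢ ỹᵢ) ∈ ℝⁿ × ℝ is nonnegative, nonzero, and satisfies (x̃ᵀ, Σᵢ ỹᵢ) M = λ (x̃ᵀ, Σᵢ ỹᵢ). -/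
open Matrix

/-- If `(x̃, ỹ)` is a nonnegative nonzero left eigenvector of the row sum
expansion `M̃ = [[A, B], [C, D]]` with eigenvalue `l`, then `(x̃, Σᵢ ỹᵢ)` is a
nonnegative nonzero left eigenvector of `M = [[A, b], [cᵀ, d]]` with the same
eigenvalue. -/
theorem expansion_leftEigenvector_contracts
    {n s : ℕ} (hn : 1 ≤ n) (hs : 1 ≤ s)
    (A : Matrix (Fin n) (Fin n) ℝ) (b c : Fin n → ℝ) (d : ℝ)
    (hA : ∀ i j, 0 ≤ A i j) (hb : ∀ i, 0 ≤ b i) (hc : ∀ i, 0 ≤ c i) (hd : 0 ≤ d)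
    (B : Matrix (Fin n) (Fin s) ℝ) (hB : ∀ i j, 0 ≤ B i j)
    (hBrow : ∀ i, ∑ j, B i j = b i)
    (D : Matrix (Fin s) (Fin s) ℝ) (hD : ∀ i j, 0 ≤ D i j)
    (hDrow : ∀ i, ∑ j, D i j = d)
    (l : ℝ) (xt : Fin n → ℝ) (yt : Fin s → ℝ)
    (hxt : ∀ i, 0 ≤ xt i) (hyt : ∀ i, 0 ≤ yt i)
    (hne : Sum.elim xt yt ≠ 0)
    (heig : Matrix.vecMul (Sum.elim xt yt)
        (Matrix.fromBlocks A B
          (Matrix.of fun (_ : Fin s) (j : Fin n) => c j) D) =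
      l • Sum.elim xt yt) :
    (∀ i, 0 ≤ xt i) ∧ 0 ≤ ∑ i, yt i ∧
      Sum.elim xt (fun _ : Fin 1 => ∑ i, yt i) ≠ 0 ∧
      Matrix.vecMul (Sum.elim xt (fun _ : Fin 1 => ∑ i, yt i))
          (Matrix.fromBlocks A
            (Matrix.of fun (i : Fin n) (_ : Fin 1) => b i)
            (Matrix.of fun (_ : Fin 1) (j : Fin n) => c j)
            (Matrix.of fun (_ : Fin 1) (_ : Fin 1) => d)) =
        l • Sum.elim xt (fun _ : Fin 1 => ∑ i, yt i) := by
  have hS : 0 ≤ ∑ i, yt i := Finset.sum_nonneg fun i _ => hyt i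
  refine ⟨hxt, hS, ?_, ?_⟩
  · -- nonzero
    intro h
    apply hne
    funext i
    cases i with
    | inl i =>
      have := congrFun h (Sum.inl i)
      simpa using this
    | inr j =>
      have hSz : ∑ i, yt i = 0 := by
        have := congrFun h (Sum.inr 0)
        simpa using this
      have : yt j = 0 :=
        (Finset.sum_eq_zero_iff_of_nonneg (fun i _ => hyt i)).mp hSz j (Finset.mem_univ j)
      simpa using this
  · -- eigenvector equation
    rw [vecMul_fromBlocks] at heig ⊢
    have h1 : ∀ i, ∑ k, xt k * A k i + (∑ k, yt k) * c i = l * xt i := by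
      intro i
      have := congrFun heig (Sum.inl i)
      simpa [vecMul, dotProduct, Finset.sum_mul] using this
    have h2 : ∀ j, ∑ k, xt k * B k j + ∑ k, yt k * D k j = l * yt j := by
      intro j
      have := congrFun heig (Sum.inr j)
      simpa [vecMul, dotProduct] using this
    funext i
    cases i with
    | inl i =>
      simpa [vecMul, dotProduct, Finset.sum_mul] using h1 i
    | inr j =>
      have key : ∑ k, xt k * b k + (∑ i, yt i) * d = l * ∑ i, yt i := by
        have := Finset.sum_congr rfl (fun j (_ : j ∈ Finset.univ) => h2 j)
        rw [Finset.sum_add_distrib, Finset.sum_comm, Finset.sum_comm (γ := Fin s)] at this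
        calc ∑ k, xt k * b k + (∑ i, yt i) * d
            = (∑ k, ∑ j, xt k * B k j) + ∑ k, ∑ j, yt k * D k j := by
              rw [Finset.sum_mul]
              congr 1
              · exact Finset.sum_congr rfl fun k _ => by rw [← hBrow k, Finset.mul_sum]
              · exact Finset.sum_congr rfl fun k _ => by rw [← hDrow k, Finset.mul_sum]
          _ = ∑ j, l * yt j := this
          _ = l * ∑ i, yt i := by rw [Finset.mul_sum]
      simpa [vecMul, dotProduct] using key
end
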